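/- If each block C_j^B of the greedily constructed ordered partition contains exactly one sample point, then the corresponding smallest interval [L_S(Z),1] is admissible in the class B_B: for any [L(Z),1] ∈ B_B with L_S(z) ≤ L(z) for all z ∈ S, one has L_S(z) = L(z) for all z ∈ S. -/

import Mathlib

open Finset
open scoped Classical

noncomputable section

/-- Binomial probability mass function `P(X = x)` for `X ~ Bin(n, p)`. -/
def binomPMF (n : ℕ) (p : ℝ) (x : ℕ) : ℝ :=
  (n.choose x : ℝ) * p ^ x * (1 - p) ^ (n - x)

/-- Probability of a set `T` of sample points under independent `X ~ Bin(n,p₁)`, `Y ~ Bin(m,p₀)`. -/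
def prob (n m : ℕ) (p₁ p₀ : ℝ) (T : Finset (ℕ × ℕ)) : ℝ :=
  ∑ z ∈ T, binomPMF n p₁ z.1 * binomPMF m p₀ z.2

/-- The range `D(Δ)` of the nuisance parameter `p₀`: `[0, 1-Δ]` if `Δ ≥ 0`, `[-Δ, 1]` if `Δ ≤ 0`. -/
def Dset (Δ : ℝ) : Set ℝ :=
  {p₀ | 0 ≤ p₀ ∧ p₀ ≤ 1 ∧ 0 ≤ p₀ + Δ ∧ p₀ + Δ ≤ 1}

/-- The sample space `S = {(x,y) : 0 ≤ x ≤ n, 0 ≤ y ≤ m}`. -/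
def sampleSpace (n m : ℕ) : Finset (ℕ × ℕ) :=
  Finset.range (n + 1) ×ˢ Finset.range (m + 1)

/-- `{C_j}` is an ordered partition of the sample space `S`. -/
def IsOrderedPartition (n m k₀ : ℕ) (C : Fin k₀ → Finset (ℕ × ℕ)) : Prop :=
  (∀ i j : Fin k₀, i ≠ j → Disjoint (C i) (C j)) ∧
  Finset.univ.biUnion C = sampleSpace n m ∧
  ∀ j, (C j).Nonempty

/-- `S_jᶜ`, the complement in `S` of `S_j = ∪_{i ≤ j} C_i`. -/
def SjCompl (n m k₀ : ℕ) (C : Fin k₀ → Finset (ℕ × ℕ)) (j : Fin k₀) : Finset (ℕ × ℕ) :=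
  (sampleSpace n m).filter (fun z => ¬ ∃ i, i ≤ j ∧ z ∈ C i)

/-- `f_j(Δ) = min_{p₀ ∈ D(Δ)} P_{(Δ,p₀)}(S_jᶜ)`. -/
def fj (n m k₀ : ℕ) (C : Fin k₀ → Finset (ℕ × ℕ)) (j : Fin k₀) (Δ : ℝ) : ℝ :=
  sInf ((fun p₀ => prob n m (p₀ + Δ) p₀ (SjCompl n m k₀ C j)) '' Dset Δ)

/-- `G_z = {Δ ∈ [-1,1] : f_j(Δ') ≥ 1-α for all Δ' < Δ}` (for `z ∈ C_j`). -/
def Gj (n m k₀ : ℕ) (α : ℝ) (C : Fin k₀ → Finset (ℕ × ℕ)) (j : Fin k₀) : Set ℝ :=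
  {Δ ∈ Set.Icc (-1 : ℝ) 1 | ∀ Δ' ∈ Set.Ico (-1 : ℝ) Δ, 1 - α ≤ fj n m k₀ C j Δ'}

/-- `L_S` on the block `C_j`: `sup G_z` if `G_z ≠ ∅`, and `-1` otherwise. -/
def LSj (n m k₀ : ℕ) (α : ℝ) (C : Fin k₀ → Finset (ℕ × ℕ)) (j : Fin k₀) : ℝ :=
  if (Gj n m k₀ α C j).Nonempty then sSup (Gj n m k₀ α C j) else -1

/-- `∪_{j=1}^{t} C_j`, the union of the first `t` blocks of the ordered partition. -/
def unionUpTo (n m k₀ : ℕ) (C : Fin k₀ → Finset (ℕ × ℕ)) (t : ℕ) : Finset (ℕ × ℕ) :=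
  (sampleSpace n m).filter (fun z => ∃ i : Fin k₀, (i : ℕ) < t ∧ z ∈ C i)

/-- `s(δ) = max{t ≤ k₀ : sup_{(Δ,p₀) : Δ ≤ δ} P(∪_{j=1}^t C_j) ≤ α}`. -/
def sIndex (n m k₀ : ℕ) (α : ℝ) (C : Fin k₀ → Finset (ℕ × ℕ)) (δ : ℝ) : ℕ :=
  sSup {t : ℕ | t ≤ k₀ ∧ ∀ Δ ∈ Set.Icc (-1 : ℝ) 1, Δ ≤ δ → ∀ p₀ ∈ Dset Δ,
    prob n m (p₀ + Δ) p₀ (unionUpTo n m k₀ C t) ≤ α}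

/-- `C_T(z) = {δ ∈ [-1,1] : z ∉ ∪_{j=1}^{s(δ)} C_j}`, the test-inversion confidence set. -/
def CTset (n m k₀ : ℕ) (α : ℝ) (C : Fin k₀ → Finset (ℕ × ℕ)) (z : ℕ × ℕ) : Set ℝ :=
  {δ ∈ Set.Icc (-1 : ℝ) 1 | z ∉ unionUpTo n m k₀ C (sIndex n m k₀ α C δ)}

/-- The neighbor set `N_k` of the set `S_k` of already ordered points. -/
def NkSet (n m : ℕ) (Sk : Finset (ℕ × ℕ)) : Finset (ℕ × ℕ) :=
  (sampleSpace n m).filter (fun z => z ∉ Sk ∧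
    ((z.1 + 1, z.2) ∈ Sk ∨ (1 ≤ z.2 ∧ (z.1, z.2 - 1) ∈ Sk)))

/-- The candidate set `NC_k ⊆ N_k`: neighbors `z` with `(x+1,y) ∉ N_k` and `(x,y-1) ∉ N_k`. -/
def NCkSet (n m : ℕ) (Sk : Finset (ℕ × ℕ)) : Finset (ℕ × ℕ) :=
  (NkSet n m Sk).filter (fun z => (z.1 + 1, z.2) ∉ NkSet n m Sk ∧
    (1 ≤ z.2 → (z.1, z.2 - 1) ∉ NkSet n m Sk))

/-- `f_{z₀}(Δ) = min_{p₀ ∈ D(Δ)} P(({z₀} ∪ S_k)ᶜ)`. -/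
def foz (n m : ℕ) (Sk : Finset (ℕ × ℕ)) (z₀ : ℕ × ℕ) (Δ : ℝ) : ℝ :=
  sInf ((fun p₀ => prob n m (p₀ + Δ) p₀
    ((sampleSpace n m).filter (fun z => z ∉ insert z₀ Sk))) '' Dset Δ)

/-- `E_{z₀} = {Δ ∈ [-1,1] : f_{z₀}(Δ') ≥ 1-α ∀ Δ' < Δ}`. -/
def Ez (n m : ℕ) (α : ℝ) (Sk : Finset (ℕ × ℕ)) (z₀ : ℕ × ℕ) : Set ℝ :=
  {Δ ∈ Set.Icc (-1 : ℝ) 1 | ∀ Δ' ∈ Set.Ico (-1 : ℝ) Δ, 1 - α ≤ foz n m Sk z₀ Δ'}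

/-- `L_o(z₀) = sup E_{z₀}` if `E_{z₀} ≠ ∅`, and `-1` otherwise. -/
def Lo (n m : ℕ) (α : ℝ) (Sk : Finset (ℕ × ℕ)) (z₀ : ℕ × ℕ) : ℝ :=
  if (Ez n m α Sk z₀).Nonempty then sSup (Ez n m α Sk z₀) else -1

/-! With singleton blocks the greedy order is a sequence of points `z₀ = (n, 0), z₁, …`, and
`L_S(z_j)` is the largest `Δ` up to which the complement of `{z₀, …, z_j}` keeps coverage
`1 - α`; it decreases with `j`. By induction on `j`, assume `L = L_S` at `z₀, …, z_{j-1}`.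
Then `L(z_j) ≤ L_S(z_{j-1})`: by Barnard's conditions if `z_{j-1}` is the right or lower
neighbour of `z_j`, and otherwise because `z_j` was already a candidate at step `j - 1`, where a
larger `L(z_j)` would give it an `L_o` as large as that of the chosen point `z_{j-1}`, so that
`z_j` would also lie in the singleton block of `z_{j-1}`. Hence `L(z_j)` lies below `L` on all of `z₀, …, z_j`, and
the coverage of `[L, 1]` makes `L(z_j)` one of the `Δ` whose supremum is `L_S(z_j)`. -/

section Probability

variable {n m : ℕ}

lemma binomPMF_nonneg {p : ℝ} (hp : p ∈ Set.Icc (0 : ℝ) 1) (x : ℕ) : 0 ≤ binomPMF n p x := by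
  have := hp.1
  have := sub_nonneg.2 hp.2
  unfold binomPMF
  positivity

lemma prob_nonneg {p₁ p₀ : ℝ} (h₁ : p₁ ∈ Set.Icc (0 : ℝ) 1) (h₀ : p₀ ∈ Set.Icc (0 : ℝ) 1)
    (T : Finset (ℕ × ℕ)) : 0 ≤ prob n m p₁ p₀ T :=
  sum_nonneg fun _ _ => mul_nonneg (binomPMF_nonneg h₁ _) (binomPMF_nonneg h₀ _)

lemma prob_mono {p₁ p₀ : ℝ} (h₁ : p₁ ∈ Set.Icc (0 : ℝ) 1) (h₀ : p₀ ∈ Set.Icc (0 : ℝ) 1)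
    {T T' : Finset (ℕ × ℕ)} (hT : T ⊆ T') : prob n m p₁ p₀ T ≤ prob n m p₁ p₀ T' :=
  sum_le_sum_of_subset_of_nonneg hT fun _ _ _ =>
    mul_nonneg (binomPMF_nonneg h₁ _) (binomPMF_nonneg h₀ _)

lemma binomPMF_one (x : ℕ) : binomPMF n 1 x = if x = n then 1 else 0 := by
  unfold binomPMF
  split_ifs with h
  · simp [h]
  · rcases Nat.lt_or_gt_of_ne h with h | h
    · simp [Nat.sub_ne_zero_of_lt h]
    · simp [Nat.choose_eq_zero_of_lt h]

lemma binomPMF_zero (y : ℕ) : binomPMF m 0 y = if y = 0 then 1 else 0 := by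
  unfold binomPMF
  split_ifs with h <;> simp [h]

lemma prob_one_zero (T : Finset (ℕ × ℕ)) :
    prob n m 1 0 T = if (n, 0) ∈ T then 1 else 0 := by
  have h : ∀ z : ℕ × ℕ, binomPMF n 1 z.1 * binomPMF m 0 z.2 = if (n, 0) = z then 1 else 0 := by
    rintro ⟨x, y⟩
    simp only [binomPMF_one, binomPMF_zero, Prod.mk.injEq]
    split_ifs <;> simp_all [eq_comm]
  simp only [prob, h, sum_ite_eq]

lemma mem_Icc_of_mem_Dset {Δ p₀ : ℝ} (hp : p₀ ∈ Dset Δ) :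
    p₀ + Δ ∈ Set.Icc (0 : ℝ) 1 ∧ p₀ ∈ Set.Icc (0 : ℝ) 1 :=
  ⟨⟨hp.2.2.1, hp.2.2.2⟩, ⟨hp.1, hp.2.1⟩⟩

lemma Dset_nonempty {Δ : ℝ} (hΔ : Δ ∈ Set.Icc (-1 : ℝ) 1) : (Dset Δ).Nonempty := by
  rcases le_total 0 Δ with h | h
  · exact ⟨0, le_rfl, zero_le_one, by linarith, by linarith [hΔ.2]⟩
  · exact ⟨-Δ, by linarith, by linarith [hΔ.1], by linarith, by linarith⟩

end Probability

def IsLowerConfidenceLimit (n m : ℕ) (α : ℝ) (L : ℕ × ℕ → ℝ) : Prop :=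
  ∀ Δ ∈ Set.Icc (-1 : ℝ) 1, ∀ p₀ ∈ Dset Δ,
    1 - α ≤ prob n m (p₀ + Δ) p₀ ((sampleSpace n m).filter (fun z => L z ≤ Δ))

/-- At `(p₁, p₀) = (1, 0)` all mass sits on `(n, 0)`. -/
lemma IsLowerConfidenceLimit.apply_corner_le_one {n m : ℕ} {α : ℝ} {L : ℕ × ℕ → ℝ}
    (hL : IsLowerConfidenceLimit n m α L) (hα : α < 1) : L (n, 0) ≤ 1 := by
  have h := hL 1 ⟨by norm_num, le_rfl⟩ 0 ⟨le_rfl, zero_le_one, by norm_num, by norm_num⟩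
  rw [zero_add, prob_one_zero] at h
  split_ifs at h with hmem
  · exact (mem_filter.1 hmem).2
  · linarith

/-! `fj`/`Gj`/`LSj` and `foz`/`Ez`/`Lo` are one construction, applied to the complement of the
points ordered so far; `minCoverage`/`coverageSet`/`lowerLimit` are that construction for an
arbitrary set `T`. -/

def minCoverage (n m : ℕ) (T : Finset (ℕ × ℕ)) (Δ : ℝ) : ℝ :=
  sInf ((fun p₀ => prob n m (p₀ + Δ) p₀ T) '' Dset Δ)

def coverageSet (n m : ℕ) (α : ℝ) (T : Finset (ℕ × ℕ)) : Set ℝ :=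
  {Δ ∈ Set.Icc (-1 : ℝ) 1 | ∀ Δ' ∈ Set.Ico (-1 : ℝ) Δ, 1 - α ≤ minCoverage n m T Δ'}

def lowerLimit (n m : ℕ) (α : ℝ) (T : Finset (ℕ × ℕ)) : ℝ :=
  if (coverageSet n m α T).Nonempty then sSup (coverageSet n m α T) else -1

section LowerLimit

variable {n m : ℕ} {α : ℝ} {T T' : Finset (ℕ × ℕ)}

lemma LSj_eq_lowerLimit (k₀ : ℕ) (C : Fin k₀ → Finset (ℕ × ℕ)) (j : Fin k₀) :
    LSj n m k₀ α C j = lowerLimit n m α (SjCompl n m k₀ C j) := rfl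

lemma Lo_eq_lowerLimit (Sk : Finset (ℕ × ℕ)) (z₀ : ℕ × ℕ) :
    Lo n m α Sk z₀ = lowerLimit n m α ((sampleSpace n m).filter (· ∉ insert z₀ Sk)) := rfl

lemma minCoverage_le {Δ p₀ : ℝ} (hp : p₀ ∈ Dset Δ) :
    minCoverage n m T Δ ≤ prob n m (p₀ + Δ) p₀ T := by
  refine csInf_le ⟨0, ?_⟩ ⟨p₀, hp, rfl⟩
  rintro _ ⟨q, hq, rfl⟩
  exact prob_nonneg (mem_Icc_of_mem_Dset hq).1 (mem_Icc_of_mem_Dset hq).2 T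

lemma le_minCoverage {Δ c : ℝ} (hΔ : Δ ∈ Set.Icc (-1 : ℝ) 1)
    (h : ∀ p₀ ∈ Dset Δ, c ≤ prob n m (p₀ + Δ) p₀ T) : c ≤ minCoverage n m T Δ :=
  le_csInf ((Dset_nonempty hΔ).image _) (Set.forall_mem_image.2 h)

lemma minCoverage_mono {Δ : ℝ} (hΔ : Δ ∈ Set.Icc (-1 : ℝ) 1) (hT : T ⊆ T') :
    minCoverage n m T Δ ≤ minCoverage n m T' Δ :=
  le_minCoverage hΔ fun _ hp => (minCoverage_le hp).trans
    (prob_mono (mem_Icc_of_mem_Dset hp).1 (mem_Icc_of_mem_Dset hp).2 hT)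

lemma coverageSet_mono (hT : T ⊆ T') : coverageSet n m α T ⊆ coverageSet n m α T' :=
  fun _ ⟨hΔ, h⟩ => ⟨hΔ, fun Δ' hΔ' =>
    (h Δ' hΔ').trans (minCoverage_mono ⟨hΔ'.1, hΔ'.2.le.trans hΔ.2⟩ hT)⟩

lemma neg_one_mem_coverageSet : (-1 : ℝ) ∈ coverageSet n m α T :=
  ⟨⟨le_rfl, by norm_num⟩, fun _ hΔ' => absurd hΔ'.2 (not_lt.2 hΔ'.1)⟩

lemma lowerLimit_eq_sSup : lowerLimit n m α T = sSup (coverageSet n m α T) :=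
  if_pos ⟨-1, neg_one_mem_coverageSet⟩

lemma bddAbove_coverageSet : BddAbove (coverageSet n m α T) :=
  bddAbove_Icc.mono fun _ hΔ => hΔ.1

lemma le_lowerLimit {Δ : ℝ} (hΔ : Δ ∈ coverageSet n m α T) : Δ ≤ lowerLimit n m α T :=
  lowerLimit_eq_sSup (T := T) ▸ le_csSup bddAbove_coverageSet hΔ

lemma lowerLimit_mem_Icc : lowerLimit n m α T ∈ Set.Icc (-1 : ℝ) 1 :=
  ⟨le_lowerLimit neg_one_mem_coverageSet,
    lowerLimit_eq_sSup (T := T) ▸ csSup_le ⟨-1, neg_one_mem_coverageSet⟩ fun _ hΔ => hΔ.1.2⟩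

lemma lowerLimit_mono (hT : T ⊆ T') : lowerLimit n m α T ≤ lowerLimit n m α T' := by
  rw [lowerLimit_eq_sSup, lowerLimit_eq_sSup]
  exact csSup_le_csSup bddAbove_coverageSet ⟨-1, neg_one_mem_coverageSet⟩ (coverageSet_mono hT)

/-- For `Δ' < A` the event `{L(Z) ≤ Δ'}` misses `U`, so its coverage passes to `S \ U`. -/
lemma le_lowerLimit_of_forall_le {L : ℕ × ℕ → ℝ} (hL : IsLowerConfidenceLimit n m α L)
    {U : Finset (ℕ × ℕ)} {A : ℝ} (hA : A ∈ Set.Icc (-1 : ℝ) 1) (hU : ∀ z ∈ U, A ≤ L z) :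
    A ≤ lowerLimit n m α ((sampleSpace n m).filter (· ∉ U)) := by
  refine le_lowerLimit ⟨hA, fun Δ' hΔ' => ?_⟩
  have hΔ'Icc : Δ' ∈ Set.Icc (-1 : ℝ) 1 := ⟨hΔ'.1, hΔ'.2.le.trans hA.2⟩
  refine le_minCoverage hΔ'Icc fun p₀ hp => (hL Δ' hΔ'Icc p₀ hp).trans ?_
  refine prob_mono (mem_Icc_of_mem_Dset hp).1 (mem_Icc_of_mem_Dset hp).2 fun z hz => ?_
  rw [mem_filter] at hz ⊢
  exact ⟨hz.1, fun hzU => (hΔ'.2.trans_le (hU z hzU)).not_ge hz.2⟩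

end LowerLimit

section UnionUpTo

variable {n m k₀ : ℕ} {α : ℝ} {C : Fin k₀ → Finset (ℕ × ℕ)}

lemma unionUpTo_zero : unionUpTo n m k₀ C 0 = ∅ :=
  filter_false_of_mem fun _ _ ⟨_, hi, _⟩ => Nat.not_lt_zero _ hi

lemma unionUpTo_mono : Monotone (unionUpTo n m k₀ C) :=
  fun _ _ hst _ hz => by
    obtain ⟨hS, i, hi, hzi⟩ := mem_filter.1 hz
    exact mem_filter.2 ⟨hS, i, hi.trans_le hst, hzi⟩

lemma SjCompl_eq (j : Fin k₀) :
    SjCompl n m k₀ C j = (sampleSpace n m).filter (· ∉ unionUpTo n m k₀ C ((j : ℕ) + 1)) := by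
  ext z
  simp only [SjCompl, unionUpTo, mem_filter, Fin.le_def, Nat.lt_succ_iff]
  constructor
  · exact fun ⟨hS, h⟩ => ⟨hS, fun ⟨_, h'⟩ => h h'⟩
  · exact fun ⟨hS, h⟩ => ⟨hS, fun h' => h ⟨hS, h'⟩⟩

lemma LSj_antitone : Antitone (LSj n m k₀ α C) := fun i j hij => by
  rw [LSj_eq_lowerLimit, LSj_eq_lowerLimit, SjCompl_eq, SjCompl_eq]
  exact lowerLimit_mono (monotone_filter_right _ fun z _ hzj hzi =>
    hzj (unionUpTo_mono (Nat.succ_le_succ (Fin.le_def.1 hij)) hzi))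

lemma le_LSj_of_forall_le {L : ℕ × ℕ → ℝ} (hL : IsLowerConfidenceLimit n m α L) {j : Fin k₀}
    {A : ℝ} (hA : A ∈ Set.Icc (-1 : ℝ) 1) (hU : ∀ z ∈ unionUpTo n m k₀ C ((j : ℕ) + 1), A ≤ L z) :
    A ≤ LSj n m k₀ α C j := by
  rw [LSj_eq_lowerLimit, SjCompl_eq]
  exact le_lowerLimit_of_forall_le hL hA hU

end UnionUpTo

def IsBarnardNeighbor (z w : ℕ × ℕ) : Prop :=
  w = (z.1 + 1, z.2) ∨ (1 ≤ z.2 ∧ w = (z.1, z.2 - 1))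

lemma le_of_isBarnardNeighbor {n m : ℕ} {L : ℕ × ℕ → ℝ}
    (hBx : ∀ x₁ x₂ y, x₁ ≤ n → x₂ ≤ n → y ≤ m → x₁ ≤ x₂ → L (x₁, y) ≤ L (x₂, y))
    (hBy : ∀ x y₁ y₂, x ≤ n → y₁ ≤ m → y₂ ≤ m → y₁ ≤ y₂ → L (x, y₂) ≤ L (x, y₁))
    {z w : ℕ × ℕ} (hz : z ∈ sampleSpace n m) (hw : w ∈ sampleSpace n m)
    (hzw : IsBarnardNeighbor z w) : L z ≤ L w := by
  simp only [sampleSpace, mem_product, mem_range] at hz hw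
  obtain ⟨x, y⟩ := z
  rcases hzw with rfl | ⟨hy, rfl⟩
  · exact hBx x (x + 1) y (by omega) (by omega) (by omega) (by omega)
  · exact hBy x (y - 1) y (by omega) (by omega) (by omega) (by omega)

section Neighbors

variable {n m : ℕ} {U : Finset (ℕ × ℕ)} {z w : ℕ × ℕ}

lemma NCkSet_empty : NCkSet n m ∅ = ∅ := by
  simp [NCkSet, NkSet]

lemma mem_NkSet_insert (hz : z ∈ NkSet n m U) (hzw : z ≠ w) : z ∈ NkSet n m (insert w U) := by
  simp only [NkSet, mem_filter, mem_insert] at hz ⊢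
  tauto

lemma mem_NCkSet_of_mem_NCkSet_insert (hz : z ∈ NCkSet n m (insert w U))
    (hw : ¬ IsBarnardNeighbor z w) : z ∈ NCkSet n m U := by
  unfold IsBarnardNeighbor at hw
  push Not at hw
  obtain ⟨hzN, hx, hy⟩ := mem_filter.1 hz
  obtain ⟨hS, hzU, hnbr⟩ := mem_filter.1 hzN
  refine mem_filter.2 ⟨mem_filter.2 ⟨hS, fun h => hzU (mem_insert_of_mem h), ?_⟩, ?_, ?_⟩
  · rcases hnbr with h | ⟨h1, h⟩
    · exact Or.inl ((mem_insert.1 h).resolve_left (Ne.symm hw.1))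
    · exact Or.inr ⟨h1, (mem_insert.1 h).resolve_left (Ne.symm (hw.2 h1))⟩
  · exact fun h => hx (mem_NkSet_insert h (Ne.symm hw.1))
  · exact fun h1 h => hy h1 (mem_NkSet_insert h (Ne.symm (hw.2 h1)))

end Neighbors

/-- The decidability instance is implicit so that it unifies with whichever instance the
filter at hand carries (the greedy hypothesis uses a classical one). -/
lemma lt_of_mem_filter_forall_le {β γ : Type*} [LinearOrder γ] {s : Finset β} {f : β → γ}
    {_ : DecidablePred fun x => ∀ y ∈ s, f y ≤ f x} {w z : β}
    (hw : w ∈ s.filter (fun x => ∀ y ∈ s, f y ≤ f x)) (hz : z ∈ s)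
    (hz' : z ∉ s.filter (fun x => ∀ y ∈ s, f y ≤ f x)) : f z < f w := by
  by_contra! h
  exact hz' (mem_filter.2 ⟨hz, fun y hy => ((mem_filter.1 hw).2 y hy).trans h⟩)

section SingletonBlocks

variable {n m k₀ : ℕ} {α : ℝ} {C : Fin k₀ → Finset (ℕ × ℕ)} {pt : Fin k₀ → ℕ × ℕ}

lemma mem_unionUpTo_iff (hpt : ∀ j, C j = {pt j}) (hS : ∀ j, pt j ∈ sampleSpace n m)
    {t : ℕ} {z : ℕ × ℕ} :
    z ∈ unionUpTo n m k₀ C t ↔ ∃ i : Fin k₀, (i : ℕ) < t ∧ pt i = z := by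
  simp only [unionUpTo, mem_filter, hpt, mem_singleton]
  constructor
  · exact fun ⟨_, i, hi, hz⟩ => ⟨i, hi, hz.symm⟩
  · rintro ⟨i, hi, rfl⟩
    exact ⟨hS i, i, hi, rfl⟩

lemma unionUpTo_succ (hpt : ∀ j, C j = {pt j}) (hS : ∀ j, pt j ∈ sampleSpace n m)
    (j : Fin k₀) :
    unionUpTo n m k₀ C ((j : ℕ) + 1) = insert (pt j) (unionUpTo n m k₀ C j) := by
  ext z
  simp only [mem_insert, mem_unionUpTo_iff hpt hS, Nat.lt_succ_iff_lt_or_eq, Fin.val_inj]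
  constructor
  · rintro ⟨i, hi | rfl, rfl⟩
    exacts [Or.inr ⟨i, hi, rfl⟩, Or.inl rfl]
  · rintro (rfl | ⟨i, hi, rfl⟩)
    exacts [⟨j, Or.inr rfl, rfl⟩, ⟨i, Or.inl hi, rfl⟩]

lemma LSj_eq_Lo (hpt : ∀ j, C j = {pt j}) (hS : ∀ j, pt j ∈ sampleSpace n m) (j : Fin k₀) :
    LSj n m k₀ α C j = Lo n m α (unionUpTo n m k₀ C j) (pt j) := by
  rw [LSj_eq_lowerLimit, SjCompl_eq, unionUpTo_succ hpt hS, Lo_eq_lowerLimit]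

lemma LSj_le_of_mem_unionUpTo (hpt : ∀ j, C j = {pt j}) (hS : ∀ j, pt j ∈ sampleSpace n m)
    {L : ℕ × ℕ → ℝ} {j : Fin k₀} (hprev : ∀ i ≤ j, L (pt i) = LSj n m k₀ α C i)
    {z : ℕ × ℕ} (hz : z ∈ unionUpTo n m k₀ C ((j : ℕ) + 1)) : LSj n m k₀ α C j ≤ L z := by
  obtain ⟨i, hi, rfl⟩ := (mem_unionUpTo_iff hpt hS).1 hz
  have hij : i ≤ j := Fin.le_def.2 (Nat.lt_succ_iff.1 hi)
  exact hprev i hij ▸ LSj_antitone hij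

/-- A candidate other than the chosen point has a strictly smaller `L_o`, whereas `L(z) > L_S`
together with the coverage of `L` would give it an `L_o` at least `L_S`. -/
lemma le_LSj_of_mem_NCkSet (hpt : ∀ j, C j = {pt j}) (hS : ∀ j, pt j ∈ sampleSpace n m)
    {L : ℕ × ℕ → ℝ} (hL : IsLowerConfidenceLimit n m α L) {r : ℕ} (h : r + 1 < k₀)
    (hgreedy : C ⟨r + 1, h⟩ = (NCkSet n m (unionUpTo n m k₀ C (r + 1))).filter
      (fun z => ∀ z₀ ∈ NCkSet n m (unionUpTo n m k₀ C (r + 1)),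
        Lo n m α (unionUpTo n m k₀ C (r + 1)) z₀ ≤ Lo n m α (unionUpTo n m k₀ C (r + 1)) z))
    (hprev : ∀ i ≤ ⟨r + 1, h⟩, L (pt i) = LSj n m k₀ α C i)
    {z : ℕ × ℕ} (hz : z ∈ NCkSet n m (unionUpTo n m k₀ C (r + 1))) (hzj : z ≠ pt ⟨r + 1, h⟩) :
    L z ≤ LSj n m k₀ α C ⟨r + 1, h⟩ := by
  by_contra! hlt
  have hC : C ⟨r + 1, h⟩ = {pt ⟨r + 1, h⟩} := hpt _
  have hchosen := mem_singleton_self (pt ⟨r + 1, h⟩)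
  rw [← hC, hgreedy] at hchosen
  have hLo : Lo n m α (unionUpTo n m k₀ C (r + 1)) z <
      Lo n m α (unionUpTo n m k₀ C (r + 1)) (pt ⟨r + 1, h⟩) := by
    refine lt_of_mem_filter_forall_le hchosen hz fun hzC => hzj ?_
    rwa [← hgreedy, hC, mem_singleton] at hzC
  have hLS : LSj n m k₀ α C ⟨r + 1, h⟩ ≤ Lo n m α (unionUpTo n m k₀ C (r + 1)) z := by
    refine le_lowerLimit_of_forall_le hL lowerLimit_mem_Icc fun w hw => ?_
    rcases mem_insert.1 hw with rfl | hw
    · exact hlt.le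
    · exact LSj_le_of_mem_unionUpTo hpt hS hprev (unionUpTo_mono (Nat.le_succ _) hw)
  have hchosenLo : LSj n m k₀ α C ⟨r + 1, h⟩ =
      Lo n m α (unionUpTo n m k₀ C (r + 1)) (pt ⟨r + 1, h⟩) := LSj_eq_Lo hpt hS _
  linarith

lemma L_pt_zero_eq_LSj (hpt : ∀ j, C j = {pt j}) (hS : ∀ j, pt j ∈ sampleSpace n m)
    {L : ℕ × ℕ → ℝ} (hL : IsLowerConfidenceLimit n m α L) (hα : α < 1) (hk : 0 < k₀)
    (hC1 : C ⟨0, hk⟩ = {(n, 0)}) (hdom : LSj n m k₀ α C ⟨0, hk⟩ ≤ L (pt ⟨0, hk⟩)) :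
    L (pt ⟨0, hk⟩) = LSj n m k₀ α C ⟨0, hk⟩ := by
  have h0 : pt ⟨0, hk⟩ = (n, 0) := singleton_inj.1 ((hpt _).symm.trans hC1)
  refine le_antisymm (le_LSj_of_forall_le hL ⟨lowerLimit_mem_Icc.1.trans hdom,
    h0 ▸ hL.apply_corner_le_one hα⟩ fun z hz => ?_) hdom
  rw [unionUpTo_succ hpt hS] at hz
  rw [unionUpTo_zero, insert_empty_eq, mem_singleton] at hz
  rw [hz]

lemma L_pt_succ_le_LSj (hpt : ∀ j, C j = {pt j}) (hS : ∀ j, pt j ∈ sampleSpace n m)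
    (hinj : Function.Injective pt) {L : ℕ × ℕ → ℝ} (hL : IsLowerConfidenceLimit n m α L)
    (hBx : ∀ x₁ x₂ y, x₁ ≤ n → x₂ ≤ n → y ≤ m → x₁ ≤ x₂ → L (x₁, y) ≤ L (x₂, y))
    (hBy : ∀ x y₁ y₂, x ≤ n → y₁ ≤ m → y₂ ≤ m → y₁ ≤ y₂ → L (x, y₂) ≤ L (x, y₁))
    (hgreedy : ∀ (t : ℕ) (h : t + 1 < k₀),
      C ⟨t + 1, h⟩ = (NCkSet n m (unionUpTo n m k₀ C (t + 1))).filter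
        (fun z => ∀ z₀ ∈ NCkSet n m (unionUpTo n m k₀ C (t + 1)),
          Lo n m α (unionUpTo n m k₀ C (t + 1)) z₀ ≤ Lo n m α (unionUpTo n m k₀ C (t + 1)) z))
    (j : Fin k₀) (h : (j : ℕ) + 1 < k₀) (hprev : ∀ i ≤ j, L (pt i) = LSj n m k₀ α C i) :
    L (pt ⟨j + 1, h⟩) ≤ LSj n m k₀ α C j := by
  have hN : pt ⟨j + 1, h⟩ ∈ NCkSet n m (insert (pt j) (unionUpTo n m k₀ C j)) := by
    have hmem := mem_singleton_self (pt ⟨j + 1, h⟩)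
    rw [← hpt, hgreedy j h] at hmem
    simp only [mem_filter] at hmem
    exact unionUpTo_succ hpt hS j ▸ hmem.1
  by_cases hadj : IsBarnardNeighbor (pt ⟨j + 1, h⟩) (pt j)
  · exact hprev j le_rfl ▸ le_of_isBarnardNeighbor hBx hBy (hS _) (hS j) hadj
  have hNC := mem_NCkSet_of_mem_NCkSet_insert hN hadj
  obtain ⟨_ | r, hj⟩ := j
  · simp [unionUpTo_zero, NCkSet_empty] at hNC
  · exact le_LSj_of_mem_NCkSet hpt hS hL hj (hgreedy r hj) hprev hNC
      (hinj.ne (by simp [Fin.ext_iff]))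

lemma L_pt_succ_eq_LSj (hpt : ∀ j, C j = {pt j}) (hS : ∀ j, pt j ∈ sampleSpace n m)
    {L : ℕ × ℕ → ℝ} (hL : IsLowerConfidenceLimit n m α L) (j : Fin k₀) (h : (j : ℕ) + 1 < k₀)
    (hprev : ∀ i ≤ j, L (pt i) = LSj n m k₀ α C i)
    (hle : L (pt ⟨j + 1, h⟩) ≤ LSj n m k₀ α C j)
    (hdom : LSj n m k₀ α C ⟨j + 1, h⟩ ≤ L (pt ⟨j + 1, h⟩)) :
    L (pt ⟨j + 1, h⟩) = LSj n m k₀ α C ⟨j + 1, h⟩ := by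
  refine le_antisymm (le_LSj_of_forall_le hL ⟨lowerLimit_mem_Icc.1.trans hdom,
    hle.trans lowerLimit_mem_Icc.2⟩ fun z hz => ?_) hdom
  rw [unionUpTo_succ hpt hS, mem_insert] at hz
  rcases hz with rfl | hz
  · exact le_rfl
  · exact hle.trans (LSj_le_of_mem_unionUpTo hpt hS hprev hz)

end SingletonBlocks

theorem greedy_partition_admissible_general
    (n m k₀ : ℕ) (hk : 0 < k₀)
    (α : ℝ) (hα : 0 ≤ α ∧ α < 1)
    (C : Fin k₀ → Finset (ℕ × ℕ)) (hC : IsOrderedPartition n m k₀ C)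
    -- the greedy construction of the partition
    (hC1 : C ⟨0, hk⟩ = {(n, 0)})
    (hgreedy : ∀ (t : ℕ) (h : t + 1 < k₀),
      C ⟨t + 1, h⟩ = (NCkSet n m (unionUpTo n m k₀ C (t + 1))).filter
        (fun z => ∀ z₀ ∈ NCkSet n m (unionUpTo n m k₀ C (t + 1)),
          Lo n m α (unionUpTo n m k₀ C (t + 1)) z₀ ≤
            Lo n m α (unionUpTo n m k₀ C (t + 1)) z))
    -- each block contains exactly one sample point
    (hsingle : ∀ j : Fin k₀, (C j).card = 1) :
    ∀ L : ℕ × ℕ → ℝ,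
      -- [L(Z),1] is a one-sided 1-α confidence interval for Δ
      (∀ Δ ∈ Set.Icc (-1 : ℝ) 1, ∀ p₀ ∈ Dset Δ,
        1 - α ≤ prob n m (p₀ + Δ) p₀ ((sampleSpace n m).filter (fun z => L z ≤ Δ))) →
      -- Barnard's "C" conditions
      (∀ x₁ x₂ y, x₁ ≤ n → x₂ ≤ n → y ≤ m → x₁ ≤ x₂ → L (x₁, y) ≤ L (x₂, y)) →
      (∀ x y₁ y₂, x ≤ n → y₁ ≤ m → y₂ ≤ m → y₁ ≤ y₂ → L (x, y₂) ≤ L (x, y₁)) →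
      -- if L dominates L_S everywhere, they coincide
      (∀ j : Fin k₀, ∀ z ∈ C j, LSj n m k₀ α C j ≤ L z) →
      ∀ j : Fin k₀, ∀ z ∈ C j, L z = LSj n m k₀ α C j := by
  intro L hL hBx hBy hdom
  choose pt hpt using fun j => card_eq_one.1 (hsingle j)
  have hmem (j : Fin k₀) : pt j ∈ C j := hpt j ▸ mem_singleton_self _
  have hS (j : Fin k₀) : pt j ∈ sampleSpace n m := hC.2.1 ▸ mem_biUnion.2 ⟨j, mem_univ _, hmem j⟩
  have hinj : Function.Injective pt := fun i j hij => by
    by_contra hne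
    exact disjoint_left.1 (hC.1 i j hne) (hmem i) (hij ▸ hmem j)
  have key (j : Fin k₀) : L (pt j) = LSj n m k₀ α C j := by
    induction j using WellFoundedLT.induction with
    | _ j ih =>
    obtain ⟨_ | s, hj⟩ := j
    · exact L_pt_zero_eq_LSj hpt hS hL hα.2 hk hC1 (hdom _ _ (hmem _))
    · have hprev : ∀ i ≤ (⟨s, by omega⟩ : Fin k₀), L (pt i) = LSj n m k₀ α C i :=
        fun i hi => ih i (Fin.lt_def.2 (Nat.lt_succ_of_le (Fin.le_def.1 hi)))
      exact L_pt_succ_eq_LSj hpt hS hL _ hj hprev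
        (L_pt_succ_le_LSj hpt hS hinj hL hBx hBy hgreedy _ hj hprev) (hdom _ _ (hmem _))
  intro j z hz
  rw [hpt j, mem_singleton] at hz
  exact hz ▸ key j

/-- **Proposition 3.** If each block `C_j^B` of the greedily constructed
ordered partition contains exactly one sample point, then the corresponding smallest
interval `[L_S(Z), 1]` is admissible in the class `B_B` of one-sided `1-α` confidence
intervals satisfying the Barnard `C` conditions: any `[L(Z),1] ∈ B_B` with
`L_S(z) ≤ L(z)` for all `z ∈ S` satisfies `L_S(z) = L(z)` for all `z ∈ S`. -/
theorem greedy_partition_admissible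
    (n m k₀ : ℕ) (hn : 1 ≤ n) (hm : 1 ≤ m) (hk : 0 < k₀)
    (α : ℝ) (hα : 0 ≤ α ∧ α < 1)
    (C : Fin k₀ → Finset (ℕ × ℕ)) (hC : IsOrderedPartition n m k₀ C)
    -- the greedy construction of the partition
    (hC1 : C ⟨0, hk⟩ = {(n, 0)})
    (hgreedy : ∀ (t : ℕ) (h : t + 1 < k₀),
      C ⟨t + 1, h⟩ = (NCkSet n m (unionUpTo n m k₀ C (t + 1))).filter
        (fun z => ∀ z₀ ∈ NCkSet n m (unionUpTo n m k₀ C (t + 1)),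
          Lo n m α (unionUpTo n m k₀ C (t + 1)) z₀ ≤
            Lo n m α (unionUpTo n m k₀ C (t + 1)) z))
    -- each block contains exactly one sample point
    (hsingle : ∀ j : Fin k₀, (C j).card = 1) :
    ∀ L : ℕ × ℕ → ℝ,
      -- [L(Z),1] is a one-sided 1-α confidence interval for Δ
      (∀ Δ ∈ Set.Icc (-1 : ℝ) 1, ∀ p₀ ∈ Dset Δ,
        1 - α ≤ prob n m (p₀ + Δ) p₀ ((sampleSpace n m).filter (fun z => L z ≤ Δ))) →
      -- Barnard's "C" conditions
      (∀ x₁ x₂ y, x₁ ≤ n → x₂ ≤ n → y ≤ m → x₁ ≤ x₂ → L (x₁, y) ≤ L (x₂, y)) →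
      (∀ x y₁ y₂, x ≤ n → y₁ ≤ m → y₂ ≤ m → y₁ ≤ y₂ → L (x, y₂) ≤ L (x, y₁)) →
      -- if L dominates L_S everywhere, they coincide
      (∀ j : Fin k₀, ∀ z ∈ C j, LSj n m k₀ α C j ≤ L z) →
      ∀ j : Fin k₀, ∀ z ∈ C j, L z = LSj n m k₀ α C j :=
  greedy_partition_admissible_general n m k₀ hk α hα C hC hC1 hgreedy hsingle
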